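/- arXiv:2204.02073 — 3 statements merged into one kernel-verified Lean document; each statement's English description precedes it below -/
import Mathlib

section
/- Knight's identity for the check function: for any reals u₁, u₂ and τ ∈ (0,1), ρ_τ(u₁ - u₂) - ρ_τ(u₁) = u₂ (1{u₁ ≤ 0} - τ) + ∫₀¹ u₂ (1{u₁ ≤ u₂ s} - 1{u₁ ≤ 0}) ds, where ρ_τ(u) = u(τ - 1{u < 0}). -/
/-!
Since `check τ u = τ u + (-u)⁺`, the left side is `-τ u₂ + (u₂ - u₁)⁺ - (-u₁)⁺`. The substitution
`t = u₂ s` turns the integral into `∫₀^{u₂} (1{u₁ ≤ t} - 1{u₁ ≤ 0}) dt`, and `t ↦ (t - u₁)⁺` is an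
antiderivative of `1{u₁ ≤ t}` away from the single point `t = u₁`.
-/

noncomputable def check (τ u : ℝ) : ℝ := u * (τ - if u < 0 then 1 else 0)

open intervalIntegral Set

lemma check_eq (τ u : ℝ) : check τ u = τ * u + max (-u) 0 := by
  unfold check
  split_ifs
  · rw [max_eq_left (by linarith)]; ring
  · rw [max_eq_right (by linarith)]; ring

lemma hasDerivAt_max_sub_const_zero {c x : ℝ} (hx : x ≠ c) :
    HasDerivAt (fun t => max (t - c) 0) (if c ≤ x then 1 else 0) x := by
  rcases hx.lt_or_gt with hlt | hgt
  · rw [if_neg hlt.not_ge]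
    refine (hasDerivAt_const x (0 : ℝ)).congr_of_eventuallyEq ?_
    filter_upwards [Iio_mem_nhds hlt] with t ht
    exact max_eq_right (by linarith [mem_Iio.mp ht])
  · rw [if_pos hgt.le]
    refine ((hasDerivAt_id x).sub_const c).congr_of_eventuallyEq ?_
    filter_upwards [Ioi_mem_nhds hgt] with t ht
    exact max_eq_left (by linarith [mem_Ioi.mp ht])

lemma monotone_ite_le_one_zero (c : ℝ) : Monotone fun t : ℝ => if c ≤ t then (1 : ℝ) else 0 := by
  intro s t hst
  dsimp only
  split_ifs <;> grind

lemma integral_ite_le_one_zero (a b c : ℝ) :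
    ∫ t in a..b, (if c ≤ t then (1 : ℝ) else 0) = max (b - c) 0 - max (a - c) 0 :=
  MeasureTheory.integral_eq_of_hasDerivAt_off_countable (fun t => max (t - c) 0) _
    (countable_singleton c) (by fun_prop) (fun _ hx => hasDerivAt_max_sub_const_zero hx.2)
    ((monotone_ite_le_one_zero c).intervalIntegrable)

theorem knight_identity_general (τ u₁ u₂ : ℝ) :
    check τ (u₁ - u₂) - check τ u₁ =
      u₂ * ((if u₁ ≤ 0 then (1:ℝ) else 0) - τ) +
        ∫ s in (0:ℝ)..1, u₂ * ((if u₁ ≤ u₂ * s then (1:ℝ) else 0) -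
          (if u₁ ≤ 0 then (1:ℝ) else 0)) := by
  set p : ℝ := if u₁ ≤ 0 then 1 else 0
  have hsubst : (∫ s in (0:ℝ)..1, u₂ * ((if u₁ ≤ u₂ * s then (1:ℝ) else 0) - p)) =
      ∫ t in (0:ℝ)..u₂, ((if u₁ ≤ t then (1:ℝ) else 0) - p) := by
    rw [integral_const_mul,
      mul_integral_comp_mul_left (f := fun t => (if u₁ ≤ t then (1:ℝ) else 0) - p),
      mul_zero, mul_one]
  rw [hsubst,
    integral_sub (monotone_ite_le_one_zero u₁).intervalIntegrable intervalIntegrable_const,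
    integral_ite_le_one_zero, integral_const, check_eq, check_eq, neg_sub, zero_sub, smul_eq_mul]
  ring

theorem knight_identity (τ u₁ u₂ : ℝ) (hτ : τ ∈ Set.Ioo (0:ℝ) 1) :
    check τ (u₁ - u₂) - check τ u₁ =
      u₂ * ((if u₁ ≤ 0 then (1:ℝ) else 0) - τ) +
        ∫ s in (0:ℝ)..1, u₂ * ((if u₁ ≤ u₂ * s then (1:ℝ) else 0) -
          (if u₁ ≤ 0 then (1:ℝ) else 0)) :=
  knight_identity_general τ u₁ u₂
end

section
/- Pointwise convergence plus convexity implies convergence of minimizers (deterministic convexity lemma): if g_n : ℝ^d → ℝ are convex functions converging pointwise to a convex function g with a unique minimizer x*, and x_n minimizes g_n, with (x_n) bounded, then x_n → x*. -/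
/-!
Convex functions are controlled on a ball by finitely many of their values: from above by their
values at the vertices of a polytope containing the ball, and from below, by reflection through
the centre `c`, via `g (c + v) + g (c - v) ≥ 2 g c`. Pointwise convergence therefore bounds the
`g n` uniformly on every ball for large `n`, which makes them eventually uniformly Lipschitz on
smaller balls; hence `g n (y n) → g a` whenever `y n → a`. Along a subsequence converging to a
cluster point `a` of the bounded minimizers, `g n (x n) ≤ g n z` passes to the limit, so `a`
minimizes `g`, and uniqueness of the minimizer leaves `x*` as the only cluster point.
-/

open Filter Metric Set Topology NNReal

section PseudoMetric

variable {ι X Y : Type*} [PseudoMetricSpace X] [PseudoMetricSpace Y]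

lemma tendsto_apply_of_eventually_lipschitzOnWith {l : Filter ι} {g : ι → X → Y} {s : Set X}
    {K : ℝ≥0} {y : ι → X} {a : X} {b : Y} (hlip : ∀ᶠ i in l, LipschitzOnWith K (g i) s)
    (ha : a ∈ s) (hys : ∀ᶠ i in l, y i ∈ s) (hga : Tendsto (fun i => g i a) l (𝓝 b))
    (hy : Tendsto y l (𝓝 a)) : Tendsto (fun i => g i (y i)) l (𝓝 b) := by
  refine tendsto_of_tendsto_of_dist hga (squeeze_zero' (.of_forall fun _ => dist_nonneg) ?_
    (by simpa using (tendsto_iff_dist_tendsto_zero.1 hy).const_mul (K : ℝ)))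
  filter_upwards [hlip, hys] with i hi hyi
  rw [dist_comm (g i a)]
  exact hi.dist_le_mul _ hyi _ ha

end PseudoMetric

section Convex

variable {ι E : Type*} [NormedAddCommGroup E] [NormedSpace ℝ E]

lemma ConvexOn.two_mul_sub_le_of_forall_le_on_ball {f : E → ℝ} {c z : E} {r M : ℝ}
    (hf : ConvexOn ℝ (ball c r) f) (hM : ∀ y ∈ ball c r, f y ≤ M) (hz : z ∈ ball c r) :
    2 * f c - M ≤ f z := by
  have hreflect : (2 : ℝ) • c - z ∈ ball c r := by
    rw [mem_ball, dist_eq_norm] at hz ⊢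
    rwa [show (2 : ℝ) • c - z - c = -(z - c) by module, norm_neg]
  have hmid := hf.2 hz hreflect (by norm_num : (0 : ℝ) ≤ 1 / 2)
    (by norm_num : (0 : ℝ) ≤ 1 / 2) (by norm_num)
  have hc : (1 / 2 : ℝ) • z + (1 / 2 : ℝ) • ((2 : ℝ) • c - z) = c := by module
  rw [hc, smul_eq_mul, smul_eq_mul] at hmid
  linarith [hM _ hreflect]

variable [FiniteDimensional ℝ E] {l : Filter ι} {g : ι → E → ℝ} {glim : E → ℝ}

lemma exists_eventually_abs_le_on_ball_of_convexOn (hg : ∀ i, ConvexOn ℝ univ (g i))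
    (hlim : ∀ x, Tendsto (fun i => g i x) l (𝓝 (glim x))) (c : E) (r : ℝ) :
    ∃ M, ∀ᶠ i in l, ∀ z ∈ ball c r, |g i z| ≤ M := by
  obtain ⟨u, hball, -⟩ :=
    (convex_closedBall c r).exists_subset_interior_convexHull_finset_of_isCompact
      (isCompact_closedBall c r) univ_mem
  obtain ⟨M₀, hM₀⟩ := (u.finite_toSet.image glim).bddAbove
  have hvertices : ∀ᶠ i in l, ∀ v ∈ (u : Set E), g i v ≤ M₀ + 1 :=
    u.finite_toSet.eventually_all.2 fun v hv => (hlim v).eventually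
      (eventually_le_nhds ((hM₀ (mem_image_of_mem glim hv)).trans_lt (lt_add_one M₀)))
  have hcentre : ∀ᶠ i in l, glim c - 1 ≤ g i c :=
    (hlim c).eventually (eventually_ge_nhds (sub_one_lt _))
  refine ⟨max (M₀ + 1) (M₀ + 1 - 2 * (glim c - 1)), ?_⟩
  filter_upwards [hvertices, hcentre] with i hi hic
  have hup : ∀ z ∈ ball c r, g i z ≤ M₀ + 1 := fun z hz => by
    obtain ⟨v, hv, hzv⟩ := (hg i).exists_ge_of_mem_convexHull (subset_univ _)
      (interior_subset (hball (ball_subset_closedBall hz)))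
    exact hzv.trans (hi v hv)
  intro z hz
  have hlow := ((hg i).subset (subset_univ _) (convex_ball c r)).two_mul_sub_le_of_forall_le_on_ball
    hup hz
  rw [abs_le]
  constructor <;> linarith [hup z hz, le_max_left (M₀ + 1) (M₀ + 1 - 2 * (glim c - 1)),
    le_max_right (M₀ + 1) (M₀ + 1 - 2 * (glim c - 1))]

lemma exists_eventually_lipschitzOnWith_ball_of_convexOn (hg : ∀ i, ConvexOn ℝ univ (g i))
    (hlim : ∀ x, Tendsto (fun i => g i x) l (𝓝 (glim x))) (c : E) (r : ℝ) :
    ∃ K, ∀ᶠ i in l, LipschitzOnWith K (g i) (ball c r) := by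
  obtain ⟨M, hM⟩ := exists_eventually_abs_le_on_ball_of_convexOn hg hlim c (r + 1)
  refine ⟨(2 * M / 1).toNNReal, hM.mono fun i hi => ?_⟩
  simpa using ((hg i).subset (subset_univ _) (convex_ball c (r + 1))).lipschitzOnWith_of_abs_le
    one_pos fun a ha => hi a ha

lemma tendsto_apply_of_convexOn_of_tendsto (hg : ∀ i, ConvexOn ℝ univ (g i))
    (hlim : ∀ x, Tendsto (fun i => g i x) l (𝓝 (glim x))) {y : ι → E} {a : E}
    (hy : Tendsto y l (𝓝 a)) : Tendsto (fun i => g i (y i)) l (𝓝 (glim a)) := by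
  obtain ⟨K, hK⟩ := exists_eventually_lipschitzOnWith_ball_of_convexOn hg hlim a 1
  exact tendsto_apply_of_eventually_lipschitzOnWith hK (mem_ball_self one_pos)
    (hy.eventually (ball_mem_nhds a one_pos)) (hlim a) hy

end Convex

theorem convex_minimizers_converge_general {d : ℕ}
    (g : ℕ → EuclideanSpace ℝ (Fin d) → ℝ) (glim : EuclideanSpace ℝ (Fin d) → ℝ)
    (hconv : ∀ n, ConvexOn ℝ Set.univ (g n))
    (hpt : ∀ x, Tendsto (fun n => g n x) atTop (nhds (glim x)))
    (xstar : EuclideanSpace ℝ (Fin d))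
    (huniq : ∀ y, (∀ x, glim y ≤ glim x) → y = xstar)
    (x : ℕ → EuclideanSpace ℝ (Fin d))
    (hxmin : ∀ n, ∀ z, g n (x n) ≤ g n z)
    (hbdd : ∃ R : ℝ, ∀ n, ‖x n‖ ≤ R) :
    Tendsto x atTop (nhds xstar) := by
  obtain ⟨R, hR⟩ := hbdd
  refine (isCompact_closedBall 0 R).tendsto_nhds_of_unique_mapClusterPt
    (.of_forall fun n => mem_closedBall_zero_iff.2 (hR n)) fun a _ ha => huniq a fun z => ?_
  obtain ⟨ψ, hψ, hxa⟩ := ha.tendsto_subseq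
  have hpt_subseq : ∀ y, Tendsto (fun k => g (ψ k) y) atTop (𝓝 (glim y)) :=
    fun y => (hpt y).comp hψ.tendsto_atTop
  exact le_of_tendsto_of_tendsto'
    (tendsto_apply_of_convexOn_of_tendsto (fun k => hconv (ψ k)) hpt_subseq hxa)
    (hpt_subseq z) fun k => hxmin (ψ k) z

theorem convex_minimizers_converge {d : ℕ}
    (g : ℕ → EuclideanSpace ℝ (Fin d) → ℝ) (glim : EuclideanSpace ℝ (Fin d) → ℝ)
    (hconv : ∀ n, ConvexOn ℝ Set.univ (g n))
    (hlimconv : ConvexOn ℝ Set.univ glim)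
    (hpt : ∀ x, Tendsto (fun n => g n x) atTop (nhds (glim x)))
    (xstar : EuclideanSpace ℝ (Fin d))
    (hmin : ∀ x, glim xstar ≤ glim x)
    (huniq : ∀ y, (∀ x, glim y ≤ glim x) → y = xstar)
    (x : ℕ → EuclideanSpace ℝ (Fin d))
    (hxmin : ∀ n, ∀ z, g n (x n) ≤ g n z)
    (hbdd : ∃ R : ℝ, ∀ n, ‖x n‖ ≤ R) :
    Tendsto x atTop (nhds xstar) :=
  convex_minimizers_converge_general g glim hconv hpt xstar huniq x hxmin hbdd
end

section
/- Pointwise convergence of convex functions on ℝ^d implies uniform convergence on compact sets: if g_n : ℝ^d → ℝ are convex and g_n(x) → g(x) for every x, then sup_{x ∈ K} |g_n(x) - g(x)| → 0 for every compact K ⊂ ℝ^d. -/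
/-!
The pointwise supremum of the `g n` is a finite convex function, hence continuous, so near each
point it bounds all `g n` from above by a common constant; reflecting through the centre and using
a lower bound for the convergent sequence `g n x₀` gives a common bound on `|g n|`. Locally
uniformly bounded convex functions are equi-Lipschitz, so the family is equicontinuous, and on a
compact set pointwise convergence of an equicontinuous family is uniform.
-/

open Filter Metric Set Topology

theorem Equicontinuous.tendstoUniformlyOn_of_tendsto {ι X α : Type*} [TopologicalSpace X]
    [UniformSpace α] {F : ι → X → α} {f : X → α} {l : Filter ι} (hF : Equicontinuous F)
    (hFf : ∀ x, Tendsto (F · x) l (𝓝 (f x))) {K : Set X} (hK : IsCompact K) :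
    TendstoUniformlyOn F f l K := by
  have key := EquicontinuousOn.tendsto_uniformOnFun_iff_pi' (𝔖 := {K}) (by simpa)
    (by simpa using hF.equicontinuousOn K) l f
  rw [UniformOnFun.tendsto_iff_tendstoUniformlyOn] at key
  exact key.2 (tendsto_pi_nhds.2 fun x => hFf x) K rfl

theorem LipschitzOnWith.equicontinuousAt {ι X α : Type*} [PseudoMetricSpace X]
    [PseudoMetricSpace α] {F : ι → X → α} {L : NNReal} {s : Set X} {x₀ : X} (hs : s ∈ 𝓝 x₀)
    (hF : ∀ i, LipschitzOnWith L (F i) s) : EquicontinuousAt F x₀ := by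
  refine equicontinuousAt_of_continuity_modulus (fun x => L * dist x₀ x) ?_ F ?_
  · simpa using ((continuous_const (y := x₀)).dist continuous_id).tendsto x₀ |>.const_mul (L : ℝ)
  · filter_upwards [hs] with x hx i
    exact (hF i).dist_le_mul x₀ (mem_of_mem_nhds hs) x hx

theorem convexOn_ciSup {ι E : Type*} [Nonempty ι] [AddCommMonoid E] [Module ℝ E] {s : Set E}
    {f : ι → E → ℝ} (hf : ∀ i, ConvexOn ℝ s (f i))
    (hbdd : ∀ x ∈ s, BddAbove (range fun i => f i x)) :
    ConvexOn ℝ s fun x => ⨆ i, f i x := by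
  refine ⟨(hf (Classical.arbitrary ι)).1, fun x hx y hy a b ha hb hab => ciSup_le fun i => ?_⟩
  calc f i (a • x + b • y) ≤ a * f i x + b * f i y := (hf i).2 hx hy ha hb hab
    _ ≤ a * (⨆ i, f i x) + b * ⨆ i, f i y := by
      gcongr
      exacts [le_ciSup (hbdd x hx) i, le_ciSup (hbdd y hy) i]

theorem ConvexOn.two_mul_le_add_map_reflect {E : Type*} [AddCommGroup E] [Module ℝ E]
    {s : Set E} {f : E → ℝ} (hf : ConvexOn ℝ s f) {x₀ a : E} (ha : a ∈ s)
    (ha' : (2 : ℝ) • x₀ - a ∈ s) :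
    2 * f x₀ ≤ f a + f ((2 : ℝ) • x₀ - a) := by
  have hmid : (1 / 2 : ℝ) • a + (1 / 2 : ℝ) • ((2 : ℝ) • x₀ - a) = x₀ := by module
  have := hf.2 ha ha' (show (0 : ℝ) ≤ 1 / 2 by norm_num) (show (0 : ℝ) ≤ 1 / 2 by norm_num)
    (by norm_num)
  rw [hmid, smul_eq_mul, smul_eq_mul] at this
  linarith

theorem ConvexOn.abs_le_of_le_of_le_on_ball {E : Type*} [NormedAddCommGroup E] [Module ℝ E]
    {f : E → ℝ} {x₀ : E} {r B c : ℝ} (hf : ConvexOn ℝ (ball x₀ r) f)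
    (hB : ∀ a ∈ ball x₀ r, f a ≤ B) (hc : c ≤ f x₀) :
    ∀ a ∈ ball x₀ r, |f a| ≤ max B (B - 2 * c) := by
  intro a ha
  have ha' : (2 : ℝ) • x₀ - a ∈ ball x₀ r := by
    rwa [mem_ball, dist_eq_norm, two_smul, add_sub_assoc, add_sub_cancel_left, ← norm_neg,
      neg_sub, ← dist_eq_norm]
  have hmid := hf.two_mul_le_add_map_reflect ha ha'
  have hreflect := hB _ ha'
  rw [abs_le]
  constructor
  · linarith [le_max_right B (B - 2 * c)]
  · exact (hB a ha).trans (le_max_left _ _)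

theorem equicontinuous_of_convexOn_of_bddAbove_of_bddBelow {E ι : Type*} [NormedAddCommGroup E]
    [NormedSpace ℝ E] [FiniteDimensional ℝ E] [Nonempty ι] {f : ι → E → ℝ}
    (hf : ∀ i, ConvexOn ℝ univ (f i)) (hAbove : ∀ x, BddAbove (range fun i => f i x))
    (hBelow : ∀ x, BddBelow (range fun i => f i x)) :
    Equicontinuous f := by
  intro x₀
  have hsup : Continuous fun x => ⨆ i, f i x :=
    continuousOn_univ.1 <| (convexOn_ciSup hf fun x _ => hAbove x).continuousOn isOpen_univ
  obtain ⟨r, hr, hB⟩ := Metric.eventually_nhds_iff_ball.1 <|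
    hsup.continuousAt.eventually (gt_mem_nhds (lt_add_one (⨆ i, f i x₀)))
  obtain ⟨c, hc⟩ := hBelow x₀
  have hball : ∀ i, ConvexOn ℝ (ball x₀ r) (f i) := fun i =>
    (hf i).subset (subset_univ _) (convex_ball x₀ r)
  have hbound : ∀ i, ∀ a ∈ ball x₀ r, |f i a| ≤ _ := fun i =>
    (hball i).abs_le_of_le_of_le_on_ball (fun a ha => (le_ciSup (hAbove a) i).trans (hB a ha).le)
      (hc ⟨i, rfl⟩)
  have hlip : ∀ i, LipschitzOnWith _ (f i) (ball x₀ (r - r / 2)) := fun i =>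
    (hball i).lipschitzOnWith_of_abs_le (half_pos hr) (hbound i)
  exact LipschitzOnWith.equicontinuousAt (ball_mem_nhds x₀ (by linarith)) hlip

theorem convex_pointwise_to_uniform_on_compacts {d : ℕ}
    (g : ℕ → EuclideanSpace ℝ (Fin d) → ℝ) (glim : EuclideanSpace ℝ (Fin d) → ℝ)
    (hconv : ∀ n, ConvexOn ℝ Set.univ (g n))
    (hpt : ∀ x, Tendsto (fun n => g n x) atTop (nhds (glim x)))
    (K : Set (EuclideanSpace ℝ (Fin d))) (hK : IsCompact K) :
    TendstoUniformlyOn g glim atTop K := by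
  have hequi : Equicontinuous g := equicontinuous_of_convexOn_of_bddAbove_of_bddBelow hconv
    (fun x => (hpt x).bddAbove_range) (fun x => (hpt x).bddBelow_range)
  exact hequi.tendstoUniformlyOn_of_tendsto hpt hK
end
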